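/- arXiv:2603.24505 — 2 statements merged into one kernel-verified Lean document; each statement's English description precedes it below -/
import Mathlib

section
/- For any real X, the Fresnel cosine and sine integrals satisfy C(X)^2 + S(X)^2 ≤ 1, where C(X) = ∫₀^X cos(πx²/2) dx and S(X) = ∫₀^X sin(πx²/2) dx. -/
/-!
Writing `C + iS = r e^{iφ}` gives `r = ∫₀^X cos(πt²/2 - φ) dt`, so it suffices to bound these
integrals by `1` for every phase `φ` (and `X ≥ 0`, by oddness). After a shift of `φ` by a multiple
of `2π` the integrand is `sin(π(a² - t²)/2)` with `0 < a ≤ 2`: it is nonpositive for `t² ≤ a² - 2`,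
nonnegative for `a² - 2 ≤ t² ≤ a²`, and its integral over any `[a, X]` is nonpositive, by
integration by parts against `1/(πt)`. So the integral is largest over the positive hump ending at
`a`. Unless that hump is shorter than `1`, `sin` is dominated on it by its Taylor polynomial of
degree 5, whose integral is an explicit polynomial in `a` and `π`; what is left is a numerical
polynomial inequality.
-/
open Real intervalIntegral

/-- Fresnel cosine integral `C(X) = ∫₀^X cos(πx²/2) dx`. -/
noncomputable def fresnelC (X : ℝ) : ℝ := ∫ x in (0:ℝ)..X, Real.cos (π * x ^ 2 / 2)

/-- Fresnel sine integral `S(X) = ∫₀^X sin(πx²/2) dx`. -/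
noncomputable def fresnelS (X : ℝ) : ℝ := ∫ x in (0:ℝ)..X, Real.sin (π * x ^ 2 / 2)

open Set

theorem le_of_hasDerivAt_le_of_nonneg {f g f' g' : ℝ → ℝ}
    (hf : ∀ x, HasDerivAt f (f' x) x) (hg : ∀ x, HasDerivAt g (g' x) x)
    (h₀ : f 0 ≤ g 0) (h' : ∀ x, 0 < x → f' x ≤ g' x) {x : ℝ} (hx : 0 ≤ x) : f x ≤ g x := by
  have hmono : MonotoneOn (fun y => g y - f y) (Ici 0) :=
    monotoneOn_of_hasDerivWithinAt_nonneg (convex_Ici 0)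
      (fun y _ => ((hg y).sub (hf y)).continuousAt.continuousWithinAt)
      (fun y _ => ((hg y).sub (hf y)).hasDerivWithinAt)
      (fun y hy => sub_nonneg.2 (h' y (by simpa using hy)))
  linarith [hmono self_mem_Ici hx hx]

theorem cos_le_one_sub_sq_div_two_add_pow_four {x : ℝ} (hx : 0 ≤ x) :
    cos x ≤ 1 - x ^ 2 / 2 + x ^ 4 / 24 :=
  le_of_hasDerivAt_le_of_nonneg (f' := fun y => -sin y) (g' := fun y => -y + y ^ 3 / 6)
    hasDerivAt_cos
    (fun y => ((((hasDerivAt_pow 2 y).div_const 2).const_sub 1).fun_add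
      ((hasDerivAt_pow 4 y).div_const 24)).congr_deriv (by norm_num; ring))
    (by simp) (fun y hy => by linarith [sin_ge_sub_cube hy.le]) hx

theorem sin_le_sub_cube_add_pow_five {x : ℝ} (hx : 0 ≤ x) :
    sin x ≤ x - x ^ 3 / 6 + x ^ 5 / 120 :=
  le_of_hasDerivAt_le_of_nonneg (f' := cos) (g' := fun y => 1 - y ^ 2 / 2 + y ^ 4 / 24)
    hasDerivAt_sin
    (fun y => (((hasDerivAt_id y).fun_sub ((hasDerivAt_pow 3 y).div_const 6)).fun_add
      ((hasDerivAt_pow 5 y).div_const 120)).congr_deriv (by norm_num; ring))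
    (by simp) (fun y hy => cos_le_one_sub_sq_div_two_add_pow_four hy.le) hx

-- The minimum over `x ≥ 3` is about `0.52`, attained near `x = 3.08`.
theorem half_le_sub_cube_add_pow_five {x : ℝ} (h : 3 ≤ x) :
    1 / 2 ≤ x - x ^ 3 / 6 + x ^ 5 / 120 := by
  nlinarith [sq_nonneg (x - 3.08), mul_nonneg (sub_nonneg.2 h) (sq_nonneg (x - 3.08))]

theorem sq_add_sq_le_of_forall_mul_cos_add_mul_sin_le {a b r : ℝ}
    (h : ∀ φ, a * cos φ + b * sin φ ≤ r) : a ^ 2 + b ^ 2 ≤ r ^ 2 := by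
  set z : ℂ := ⟨a, b⟩
  have hz : a * cos z.arg + b * sin z.arg = ‖z‖ := by
    rw [show a = ‖z‖ * cos z.arg from (Complex.norm_mul_cos_arg z).symm,
      show b = ‖z‖ * sin z.arg from (Complex.norm_mul_sin_arg z).symm]
    linear_combination ‖z‖ * sin_sq_add_cos_sq z.arg
  have hnorm : ‖z‖ ^ 2 = a ^ 2 + b ^ 2 := by
    rw [Complex.sq_norm, Complex.normSq_mk]; ring
  rw [← hnorm]
  exact pow_le_pow_left₀ (norm_nonneg z) (hz ▸ h z.arg) 2

theorem integral_le_integral_of_sign_pattern {f : ℝ → ℝ} (hf : Continuous f) {p a X : ℝ}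
    (hp : 0 ≤ p) (hpa : p ≤ a) (hX : 0 ≤ X) (hneg : ∀ t ∈ Ioo 0 p, f t ≤ 0)
    (hpos : ∀ t ∈ Icc p a, 0 ≤ f t) (htail : a ≤ X → ∫ t in a..X, f t ≤ 0) :
    ∫ t in 0..X, f t ≤ ∫ t in p..a, f t := by
  have hint (u v : ℝ) : IntervalIntegrable f MeasureTheory.volume u v :=
    hf.intervalIntegrable u v
  have head_nonpos {Y : ℝ} (hY : 0 ≤ Y) (hYp : Y ≤ p) : ∫ t in 0..Y, f t ≤ 0 := by
    simpa using integral_mono_on_of_le_Ioo hY (hint 0 Y) (intervalIntegrable_const (c := 0))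
      fun t ht => hneg t ⟨ht.1, ht.2.trans_le hYp⟩
  have head_nonpos_p := head_nonpos hp le_rfl
  rcases le_total X p with hXp | hpX
  · exact (head_nonpos hX hXp).trans (integral_nonneg hpa hpos)
  rcases le_total X a with hXa | haX
  · have hXa_nonneg : 0 ≤ ∫ t in X..a, f t :=
      integral_nonneg hXa fun t ht => hpos t ⟨hpX.trans ht.1, ht.2⟩
    have := integral_add_adjacent_intervals (hint 0 p) (hint p X)
    have := integral_add_adjacent_intervals (hint p X) (hint X a)
    linarith
  · have := integral_add_adjacent_intervals (hint 0 p) (hint p a)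
    have := integral_add_adjacent_intervals (hint 0 a) (hint a X)
    linarith [htail haX]

theorem integral_zero_neg_of_even {f : ℝ → ℝ} (hf : ∀ x, f (-x) = f x) (X : ℝ) :
    ∫ x in 0..-X, f x = -∫ x in 0..X, f x := by
  have h := integral_comp_neg (a := 0) (b := X) f
  simp only [hf, neg_zero] at h
  rw [integral_symm, h]

theorem fresnelC_neg (X : ℝ) : fresnelC (-X) = -fresnelC X :=
  integral_zero_neg_of_even (fun x => by rw [neg_sq]) X

theorem fresnelS_neg (X : ℝ) : fresnelS (-X) = -fresnelS X :=
  integral_zero_neg_of_even (fun x => by rw [neg_sq]) X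

theorem fresnelC_mul_cos_add_fresnelS_mul_sin (X φ : ℝ) :
    fresnelC X * cos φ + fresnelS X * sin φ = ∫ t in 0..X, cos (π * t ^ 2 / 2 - φ) := by
  simp only [fresnelC, fresnelS, cos_sub, ← integral_mul_const]
  exact (integral_add (by apply Continuous.intervalIntegrable; fun_prop)
    (by apply Continuous.intervalIntegrable; fun_prop)).symm

/-- The integrand `cos (π * t ^ 2 / 2 - φ)` for the phase `φ = π * a ^ 2 / 2 - π / 2`, at which
its positive hump ends at `t = a`. -/
noncomputable def fresnelHump (a t : ℝ) : ℝ := sin (π * (a ^ 2 - t ^ 2) / 2)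

theorem continuous_fresnelHump (a : ℝ) : Continuous (fresnelHump a) := by
  unfold fresnelHump; fun_prop

theorem exists_cos_sub_eq_fresnelHump (φ : ℝ) :
    ∃ a, 0 < a ∧ a ^ 2 ≤ 4 ∧ ∀ t, cos (π * t ^ 2 / 2 - φ) = fresnelHump a t := by
  set ψ := toIocMod two_pi_pos (-(π / 2)) φ
  obtain ⟨hψ₁, hψ₂⟩ := toIocMod_mem_Ioc two_pi_pos (-(π / 2)) φ
  have hpos : 0 < (2 * ψ + π) / π := div_pos (by linarith) pi_pos
  refine ⟨√((2 * ψ + π) / π), sqrt_pos.2 hpos, ?_, fun t => ?_⟩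
  · rw [sq_sqrt hpos.le, div_le_iff₀ pi_pos]; linarith
  · have hφ : φ = ψ + toIocDiv two_pi_pos (-(π / 2)) φ * (2 * π) := by
      rw [← self_sub_toIocMod_eq_mul]; ring
    rw [fresnelHump, sq_sqrt hpos.le, hφ, ← sub_sub, cos_sub_int_mul_two_pi, ← cos_pi_div_two_sub]
    congr 1
    field_simp
    ring

theorem fresnelHump_nonneg {a t : ℝ} (h₀ : t ^ 2 ≤ a ^ 2) (h₂ : a ^ 2 ≤ t ^ 2 + 2) :
    0 ≤ fresnelHump a t :=
  sin_nonneg_of_nonneg_of_le_pi (by nlinarith [pi_pos]) (by nlinarith [pi_pos])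

theorem fresnelHump_nonpos {a t : ℝ} (h₂ : t ^ 2 + 2 ≤ a ^ 2) (h₄ : a ^ 2 ≤ t ^ 2 + 4) :
    fresnelHump a t ≤ 0 := by
  rw [fresnelHump, ← neg_nonneg, ← sin_sub_pi]
  exact sin_nonneg_of_nonneg_of_le_pi (by nlinarith [pi_pos]) (by nlinarith [pi_pos])

-- Integration by parts against `1 / (π * t)`; subtracting `1` from `cos` makes the boundary
-- term at `X` nonpositive.
theorem integral_fresnelHump_le {a b X : ℝ} (hb : 0 < b) (hbX : b ≤ X) :
    ∫ t in b..X, fresnelHump a t ≤ (1 - cos (π * (a ^ 2 - b ^ 2) / 2)) / (π * b) := by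
  set g : ℝ → ℝ := fun t => (cos (π * (a ^ 2 - t ^ 2) / 2) - 1) / (π * t)
  have hnum (t : ℝ) : cos (π * (a ^ 2 - t ^ 2) / 2) - 1 ≤ 0 := sub_nonpos.2 (cos_le_one _)
  have hg' {t : ℝ} (ht : 0 < t) : HasDerivAt g
      (fresnelHump a t - (cos (π * (a ^ 2 - t ^ 2) / 2) - 1) / (π * t ^ 2)) t := by
    have hcos : HasDerivAt (fun t => cos (π * (a ^ 2 - t ^ 2) / 2) - 1)
        (π * t * fresnelHump a t) t :=
      ((((hasDerivAt_pow 2 t).const_sub (a ^ 2)).const_mul π).div_const 2).cos.sub_const 1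
        |>.congr_deriv (by simp only [fresnelHump]; ring)
    refine (hcos.div ((hasDerivAt_id' t).const_mul π) (by positivity)).congr_deriv ?_
    field_simp
  have hbound := integral_le_sub_of_hasDeriv_right_of_le hbX
    (fun t ht => (hg' (hb.trans_le ht.1)).continuousAt.continuousWithinAt)
    (fun t ht => (hg' (hb.trans ht.1)).hasDerivWithinAt)
    (continuous_fresnelHump a).integrableOn_Icc
    (fun t ht => (le_sub_self_iff _).2 <|
      div_nonpos_of_nonpos_of_nonneg (hnum t) (by have := hb.trans ht.1; positivity))
  have hgX : g X ≤ 0 :=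
    div_nonpos_of_nonpos_of_nonneg (hnum X) (by have := hb.trans_le hbX; positivity)
  have hgb : -g b = (1 - cos (π * (a ^ 2 - b ^ 2) / 2)) / (π * b) := by simp only [g]; ring
  linarith

noncomputable def fresnelHumpTaylor (a t : ℝ) : ℝ :=
  π * (a ^ 2 - t ^ 2) / 2 - (π * (a ^ 2 - t ^ 2) / 2) ^ 3 / 6 + (π * (a ^ 2 - t ^ 2) / 2) ^ 5 / 120

theorem fresnelHump_le_fresnelHumpTaylor {a t : ℝ} (h : t ^ 2 ≤ a ^ 2) :
    fresnelHump a t ≤ fresnelHumpTaylor a t :=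
  sin_le_sub_cube_add_pow_five (by nlinarith [pi_pos])

theorem half_le_fresnelHumpTaylor {a t : ℝ} (h : t ^ 2 + 2 ≤ a ^ 2) :
    1 / 2 ≤ fresnelHumpTaylor a t :=
  half_le_sub_cube_add_pow_five (by nlinarith [pi_gt_three])

theorem integral_fresnelHumpTaylor (a : ℝ) : ∫ t in 0..a, fresnelHumpTaylor a t =
    a * (π * a ^ 2 / 3 - π ^ 3 * a ^ 6 / 105 + π ^ 5 * a ^ 10 / 10395) := by
  have hexpand (t : ℝ) : fresnelHumpTaylor a t =
      (π / 2 * a ^ 2 - (π / 2) ^ 3 / 6 * a ^ 6 + (π / 2) ^ 5 / 120 * a ^ 10)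
        + (-(π / 2) + (π / 2) ^ 3 / 2 * a ^ 4 - (π / 2) ^ 5 / 24 * a ^ 8) * t ^ 2
        + (-(π / 2) ^ 3 / 2 * a ^ 2 + (π / 2) ^ 5 / 12 * a ^ 6) * t ^ 4
        + ((π / 2) ^ 3 / 6 - (π / 2) ^ 5 / 12 * a ^ 4) * t ^ 6
        + (π / 2) ^ 5 / 24 * a ^ 2 * t ^ 8
        - (π / 2) ^ 5 / 120 * t ^ 10 := by
    simp only [fresnelHumpTaylor]; ring
  simp_rw [hexpand]
  simp (disch := apply Continuous.intervalIntegrable; fun_prop) only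
    [integral_add, integral_sub, integral_const_mul, integral_const, integral_pow]
  ring

theorem pi_poly_le_decimal_poly {s : ℝ} (hs : 0 ≤ s) :
    π * s / 3 - π ^ 3 * s ^ 3 / 105 + π ^ 5 * s ^ 5 / 10395
      ≤ 1.0472 * s - 0.295297 * s ^ 3 + 0.0294411 * s ^ 5 := by
  have hπ₃ : 3.141592 ^ 3 < π ^ 3 := pow_lt_pow_left₀ pi_gt_d6 (by norm_num) (by norm_num)
  have hπ₅ : π ^ 5 < 3.141593 ^ 5 := pow_lt_pow_left₀ pi_lt_d6 pi_pos.le (by norm_num)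
  nlinarith [mul_nonneg hs (by linarith [pi_lt_d6] : (0:ℝ) ≤ 3.1416 - π),
    mul_nonneg (pow_nonneg hs 3) (by linarith : (0:ℝ) ≤ π ^ 3 - 3.141592 ^ 3),
    mul_nonneg (pow_nonneg hs 5) (by linarith : (0:ℝ) ≤ 3.141593 ^ 5 - π ^ 5),
    pow_nonneg hs 3, pow_nonneg hs 5]

theorem mul_pi_poly_le_of_amgm {a c M : ℝ} (ha : 0 ≤ a) (hc : 0 < c) (hM : 0 ≤ M)
    (h : (a ^ 2 + c ^ 2) * (1.0472 * a ^ 2 - 0.295297 * (a ^ 2) ^ 3 + 0.0294411 * (a ^ 2) ^ 5)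
      ≤ 2 * c * M) :
    a * (π * a ^ 2 / 3 - π ^ 3 * a ^ 6 / 105 + π ^ 5 * a ^ 10 / 10395) ≤ M := by
  have hU := pi_poly_le_decimal_poly (sq_nonneg a)
  rw [show a ^ 6 = (a ^ 2) ^ 3 by ring, show a ^ 10 = (a ^ 2) ^ 5 by ring]
  set U := π * a ^ 2 / 3 - π ^ 3 * (a ^ 2) ^ 3 / 105 + π ^ 5 * (a ^ 2) ^ 5 / 10395
  rcases le_total U 0 with hU₀ | hU₀
  · exact (mul_nonpos_of_nonneg_of_nonpos ha hU₀).trans hM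
  · have hamgm : 2 * c * a ≤ a ^ 2 + c ^ 2 := by nlinarith [sq_nonneg (a - c)]
    have := mul_le_mul_of_nonneg_left hU (by positivity : (0:ℝ) ≤ a ^ 2 + c ^ 2)
    nlinarith [mul_le_mul_of_nonneg_right hamgm hU₀]

theorem mul_pi_poly_le_one {a : ℝ} (ha : 0 ≤ a) (ha2 : a ^ 2 ≤ 2) :
    a * (π * a ^ 2 / 3 - π ^ 3 * a ^ 6 / 105 + π ^ 5 * a ^ 10 / 10395) ≤ 1 := by
  refine mul_pi_poly_le_of_amgm ha (c := 5 / 4) (by norm_num) zero_le_one ?_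
  have hs := sq_nonneg a
  generalize a ^ 2 = s at *
  nlinarith [sq_nonneg (s - 8/5), mul_nonneg hs (sub_nonneg.2 ha2), sq_nonneg (s-1),
    mul_nonneg (mul_nonneg hs hs) (sub_nonneg.2 ha2), sq_nonneg (s*(s-8/5)),
    mul_nonneg (mul_nonneg hs (sub_nonneg.2 ha2)) (sq_nonneg (s-8/5)),
    mul_nonneg (mul_nonneg (mul_nonneg hs hs) (sub_nonneg.2 ha2)) (sq_nonneg (s-8/5)),
    mul_nonneg (mul_nonneg hs (sub_nonneg.2 ha2)) (sq_nonneg (s-1)),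
    sq_nonneg (s^2-5/2)]

theorem mul_pi_poly_le_sq_sub_one {a : ℝ} (ha : 0 ≤ a) (ha2 : 2 ≤ a ^ 2) (ha94 : a ^ 2 ≤ 9 / 4) :
    a * (π * a ^ 2 / 3 - π ^ 3 * a ^ 6 / 105 + π ^ 5 * a ^ 10 / 10395) ≤ a ^ 2 - 1 := by
  refine mul_pi_poly_le_of_amgm ha (c := 3 / 2) (by norm_num) (by linarith) ?_
  generalize a ^ 2 = s at *
  have h₁ := sub_nonneg.2 ha2
  have h₂ := sub_nonneg.2 ha94
  nlinarith [mul_nonneg h₁ h₂, sq_nonneg (s - 17/8),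
    mul_nonneg (mul_nonneg h₁ h₂) (sq_nonneg (s - 17/8)),
    mul_nonneg (mul_nonneg h₁ h₂) (sq_nonneg s), mul_nonneg (mul_nonneg h₁ h₂) (sq_nonneg (s - 2))]

theorem integral_fresnelHump_le_one_of_sq_le_two {a : ℝ} (ha : 0 ≤ a) (ha2 : a ^ 2 ≤ 2) :
    ∫ t in 0..a, fresnelHump a t ≤ 1 :=
  calc ∫ t in 0..a, fresnelHump a t ≤ ∫ t in 0..a, fresnelHumpTaylor a t :=
        integral_mono_on ha ((continuous_fresnelHump a).intervalIntegrable 0 a)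
          (by apply Continuous.intervalIntegrable; unfold fresnelHumpTaylor; fun_prop)
          fun t ht => fresnelHump_le_fresnelHumpTaylor (pow_le_pow_left₀ ht.1 ht.2 2)
    _ = _ := integral_fresnelHumpTaylor a
    _ ≤ 1 := mul_pi_poly_le_one ha ha2

theorem integral_fresnelHump_le_one_of_sq_eq_add_two {a p : ℝ} (hp : 0 ≤ p) (ha : 0 ≤ a)
    (hap : a ^ 2 = p ^ 2 + 2) : ∫ t in p..a, fresnelHump a t ≤ 1 := by
  have hpa : p ≤ a := by nlinarith
  have hint (u v : ℝ) : IntervalIntegrable (fresnelHump a) MeasureTheory.volume u v :=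
    (continuous_fresnelHump a).intervalIntegrable u v
  have hintT (u v : ℝ) : IntervalIntegrable (fresnelHumpTaylor a) MeasureTheory.volume u v := by
    apply Continuous.intervalIntegrable; unfold fresnelHumpTaylor; fun_prop
  rcases le_total p (1 / 2) with hp2 | hp2
  · have hhump : ∫ t in p..a, fresnelHump a t ≤ ∫ t in p..a, fresnelHumpTaylor a t :=
      integral_mono_on hpa (hint p a) (hintT p a) fun t ht =>
        fresnelHump_le_fresnelHumpTaylor (pow_le_pow_left₀ (hp.trans ht.1) ht.2 2)
    have hhead : ∫ t in 0..p, (1 / 2 : ℝ) ≤ ∫ t in 0..p, fresnelHumpTaylor a t :=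
      integral_mono_on hp intervalIntegrable_const (hintT 0 p) fun t ht =>
        half_le_fresnelHumpTaylor (by nlinarith [pow_le_pow_left₀ ht.1 ht.2 2])
    have hsplit := integral_add_adjacent_intervals (hintT 0 p) (hintT p a)
    rw [integral_fresnelHumpTaylor] at hsplit
    have hpoly := mul_pi_poly_le_sq_sub_one ha (by nlinarith) (by nlinarith)
    simp only [integral_const, smul_eq_mul, sub_zero] at hhead
    nlinarith
  -- Here the hump is short: `a - p = 2 / (a + p) ≤ 1` since `a ≥ 3 / 2`.
  · calc ∫ t in p..a, fresnelHump a t ≤ ∫ t in p..a, (1 : ℝ) :=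
          integral_mono_on hpa (hint p a) intervalIntegrable_const fun t _ => sin_le_one _
      _ = a - p := by simp
      _ ≤ 1 := by nlinarith

theorem integral_fresnelHump_le_one {a X : ℝ} (ha : 0 < a) (ha4 : a ^ 2 ≤ 4) (hX : 0 ≤ X) :
    ∫ t in 0..X, fresnelHump a t ≤ 1 := by
  have htail (haX : a ≤ X) : ∫ t in a..X, fresnelHump a t ≤ 0 :=
    (integral_fresnelHump_le ha haX).trans_eq (by simp)
  rcases le_total (a ^ 2) 2 with ha2 | ha2
  · calc ∫ t in 0..X, fresnelHump a t ≤ ∫ t in 0..a, fresnelHump a t :=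
          integral_le_integral_of_sign_pattern (continuous_fresnelHump a) le_rfl ha.le hX
            (by simp) (fun t ht => fresnelHump_nonneg (pow_le_pow_left₀ ht.1 ht.2 2)
              (by nlinarith)) htail
      _ ≤ 1 := integral_fresnelHump_le_one_of_sq_le_two ha.le ha2
  · set p := √(a ^ 2 - 2)
    have hp : 0 ≤ p := sqrt_nonneg _
    have hp2 : p ^ 2 = a ^ 2 - 2 := sq_sqrt (by linarith)
    calc ∫ t in 0..X, fresnelHump a t ≤ ∫ t in p..a, fresnelHump a t :=
          integral_le_integral_of_sign_pattern (continuous_fresnelHump a) hp (by nlinarith) hX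
            (fun t ht => fresnelHump_nonpos (by nlinarith [pow_le_pow_left₀ ht.1.le ht.2.le 2])
              (by nlinarith))
            (fun t ht => fresnelHump_nonneg (pow_le_pow_left₀ (hp.trans ht.1) ht.2 2)
              (by nlinarith [pow_le_pow_left₀ hp ht.1 2])) htail
      _ ≤ 1 := integral_fresnelHump_le_one_of_sq_eq_add_two hp ha.le (by linarith)

theorem integral_cos_sub_le_one {X : ℝ} (hX : 0 ≤ X) (φ : ℝ) :
    ∫ t in 0..X, cos (π * t ^ 2 / 2 - φ) ≤ 1 := by
  obtain ⟨a, ha, ha4, hcos⟩ := exists_cos_sub_eq_fresnelHump φ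
  simp only [hcos]
  exact integral_fresnelHump_le_one ha ha4 hX

theorem fresnel_sq_add_sq_le_one (X : ℝ) :
    (fresnelC X) ^ 2 + (fresnelS X) ^ 2 ≤ 1 := by
  wlog hX : 0 ≤ X generalizing X
  · simpa [fresnelC_neg, fresnelS_neg] using this (-X) (by linarith)
  simpa using sq_add_sq_le_of_forall_mul_cos_add_mul_sin_le fun φ =>
    (fresnelC_mul_cos_add_fresnelS_mul_sin X φ).trans_le (integral_cos_sub_le_one hX φ)
end

section
/- The Fresnel cosine integral C(X) = ∫₀^X cos(πx²/2) dx is nonnegative for all X ≥ 0. -/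
open Real intervalIntegral

lemma fresnel_cont : Continuous fun x : ℝ => Real.cos (π * x ^ 2 / 2) := by
  fun_prop

lemma fresnel_int (a b : ℝ) :
    IntervalIntegrable (fun x : ℝ => Real.cos (π * x ^ 2 / 2)) MeasureTheory.volume a b :=
  fresnel_cont.intervalIntegrable a b

lemma w_cont : Continuous fun u : ℝ => u / Real.sqrt (u ^ 2 + 2) := by
  apply continuous_id.div (Real.continuous_sqrt.comp (by fun_prop))
  intro u
  exact ne_of_gt (Real.sqrt_pos.2 (by positivity))

lemma wf_int (a b : ℝ) :
    IntervalIntegrable (fun u : ℝ => u / Real.sqrt (u ^ 2 + 2) * Real.cos (π * u ^ 2 / 2))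
      MeasureTheory.volume a b :=
  (w_cont.mul fresnel_cont).intervalIntegrable a b

lemma w_le_one {u : ℝ} (hu : 0 ≤ u) : u / Real.sqrt (u ^ 2 + 2) ≤ 1 := by
  rw [div_le_one (Real.sqrt_pos.2 (by positivity))]
  calc u = Real.sqrt (u ^ 2) := by rw [Real.sqrt_sq hu]
  _ ≤ Real.sqrt (u ^ 2 + 2) := Real.sqrt_le_sqrt (by linarith)

/-- cos is nonneg on lobes where `x² ∈ [4k+3, 4k+5]`. -/
lemma cos_lobe_nonneg (k : ℕ) {x : ℝ} (h1 : 4 * (k:ℝ) + 3 ≤ x ^ 2) (h2 : x ^ 2 ≤ 4 * (k:ℝ) + 5) :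
    0 ≤ Real.cos (π * x ^ 2 / 2) := by
  have hpi := Real.pi_pos
  have e := Real.cos_add_int_mul_two_pi (π * x ^ 2 / 2 - (((k:ℤ) + 1 : ℤ) : ℝ) * (2 * π)) ((k:ℤ) + 1)
  have e2 : π * x ^ 2 / 2 - (((k:ℤ) + 1 : ℤ) : ℝ) * (2 * π) + (((k:ℤ) + 1 : ℤ) : ℝ) * (2 * π)
      = π * x ^ 2 / 2 := by ring
  rw [e2] at e
  rw [e]
  apply Real.cos_nonneg_of_mem_Icc
  constructor <;> · push_cast; nlinarith

lemma cos_neg_lobe {x : ℝ} (h1 : 1 ≤ x ^ 2) (h2 : x ^ 2 ≤ 3) :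
    Real.cos (π * x ^ 2 / 2) ≤ 0 := by
  have hpi := Real.pi_pos
  apply Real.cos_nonpos_of_pi_div_two_le_of_le <;> nlinarith

/-- Substitution `x = √(u²+2)`. -/
lemma fresnel_subst (a Y : ℝ) :
    (∫ x in Real.sqrt (a ^ 2 + 2)..Real.sqrt (Y ^ 2 + 2), Real.cos (π * x ^ 2 / 2))
      = -∫ u in a..Y, u / Real.sqrt (u ^ 2 + 2) * Real.cos (π * u ^ 2 / 2) := by
  have hderiv : ∀ u ∈ Set.uIcc a Y,
      HasDerivAt (fun u : ℝ => Real.sqrt (u ^ 2 + 2)) (u / Real.sqrt (u ^ 2 + 2)) u := by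
    intro u _
    have h1 : HasDerivAt (fun u : ℝ => u ^ 2 + 2) (2 * u) u := by
      simpa using ((hasDerivAt_pow 2 u).add_const 2)
    have := h1.sqrt (by positivity)
    convert this using 1
    have hne : Real.sqrt (u ^ 2 + 2) ≠ 0 := ne_of_gt (Real.sqrt_pos.2 (by positivity))
    field_simp
  have key := integral_comp_smul_deriv (a := a) (b := Y) hderiv
    (w_cont.continuousOn) fresnel_cont
  rw [← key]
  rw [← intervalIntegral.integral_neg]
  apply intervalIntegral.integral_congr
  intro u _
  have hs : Real.sqrt (u ^ 2 + 2) ^ 2 = u ^ 2 + 2 := Real.sq_sqrt (by positivity)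
  simp only [Function.comp, smul_eq_mul, hs]
  have e : π * (u ^ 2 + 2) / 2 = π * u ^ 2 / 2 + π := by ring
  rw [e, Real.cos_add_pi]
  ring

/-- Pairing: positive lobe followed by (part of) the next negative lobe is nonneg. -/
lemma fresnel_pair (k : ℕ) {Y : ℝ} (hY1 : Real.sqrt (4 * (k:ℝ) + 3) ≤ Y)
    (hY2 : Y ≤ Real.sqrt (4 * (k:ℝ) + 5)) :
    0 ≤ ∫ x in Real.sqrt (4 * (k:ℝ) + 3)..Real.sqrt (Y ^ 2 + 2), Real.cos (π * x ^ 2 / 2) := by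
  set a := Real.sqrt (4 * (k:ℝ) + 3) with ha_def
  set m := Real.sqrt (4 * (k:ℝ) + 5) with hm_def
  have ha0 : 0 ≤ a := Real.sqrt_nonneg _
  have ha2 : a ^ 2 = 4 * (k:ℝ) + 3 := Real.sq_sqrt (by positivity)
  have hm2 : m ^ 2 = 4 * (k:ℝ) + 5 := Real.sq_sqrt (by positivity)
  have hm_eq : Real.sqrt (a ^ 2 + 2) = m := by rw [ha2, hm_def]; congr 1; ring
  have hsub := fresnel_subst a Y
  rw [hm_eq] at hsub
  have hsq : ∀ u, a ≤ u → u ≤ m → 4 * (k:ℝ) + 3 ≤ u ^ 2 ∧ u ^ 2 ≤ 4 * (k:ℝ) + 5 := by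
    intro u h1 h2
    constructor
    · rw [← ha2]; exact pow_le_pow_left₀ ha0 h1 2
    · rw [← hm2]; exact pow_le_pow_left₀ (le_trans ha0 h1) h2 2
  have hYm : Y ≤ Real.sqrt (Y ^ 2 + 2) := by
    calc Y ≤ Real.sqrt (Y ^ 2) := by rw [Real.sqrt_sq (le_trans ha0 hY1)]
    _ ≤ Real.sqrt (Y ^ 2 + 2) := Real.sqrt_le_sqrt (by linarith)
  have hsplit : (∫ x in a..Real.sqrt (Y ^ 2 + 2), Real.cos (π * x ^ 2 / 2))
      = (∫ x in a..Y, Real.cos (π * x ^ 2 / 2))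
        + (∫ x in Y..m, Real.cos (π * x ^ 2 / 2))
        + (∫ x in m..Real.sqrt (Y ^ 2 + 2), Real.cos (π * x ^ 2 / 2)) := by
    rw [integral_add_adjacent_intervals (fresnel_int a Y) (fresnel_int Y m),
      integral_add_adjacent_intervals (fresnel_int a m) (fresnel_int m _)]
  rw [hsplit, hsub]
  have h2 : 0 ≤ ∫ x in Y..m, Real.cos (π * x ^ 2 / 2) := by
    apply intervalIntegral.integral_nonneg hY2
    intro u hu
    obtain ⟨l, r⟩ := hsq u (le_trans hY1 hu.1) hu.2
    exact cos_lobe_nonneg k l r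
  have h1 : 0 ≤ ∫ x in a..Y, (1 - x / Real.sqrt (x ^ 2 + 2)) * Real.cos (π * x ^ 2 / 2) := by
    apply intervalIntegral.integral_nonneg hY1
    intro u hu
    obtain ⟨l, r⟩ := hsq u hu.1 (le_trans hu.2 hY2)
    have hw := w_le_one (le_trans ha0 hu.1)
    exact mul_nonneg (by linarith) (cos_lobe_nonneg k l r)
  have hone : (∫ x in a..Y, (1 - x / Real.sqrt (x ^ 2 + 2)) * Real.cos (π * x ^ 2 / 2))
      = (∫ x in a..Y, Real.cos (π * x ^ 2 / 2))
        - ∫ x in a..Y, x / Real.sqrt (x ^ 2 + 2) * Real.cos (π * x ^ 2 / 2) := by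
    rw [← intervalIntegral.integral_sub (fresnel_int a Y) (wf_int a Y)]
    apply intervalIntegral.integral_congr
    intro u _
    ring
  rw [hone] at h1
  linarith

/-- Step: integral from `√(4k+3)` to any `X ∈ [√(4k+3), √(4k+7)]` is nonneg. -/
lemma fresnel_step (k : ℕ) {X : ℝ} (h1 : Real.sqrt (4 * (k:ℝ) + 3) ≤ X)
    (h2 : X ≤ Real.sqrt (4 * (k:ℝ) + 7)) :
    0 ≤ ∫ x in Real.sqrt (4 * (k:ℝ) + 3)..X, Real.cos (π * x ^ 2 / 2) := by
  set a := Real.sqrt (4 * (k:ℝ) + 3) with ha_def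
  have ha0 : 0 ≤ a := Real.sqrt_nonneg _
  have hX0 : 0 ≤ X := le_trans ha0 h1
  have ha2 : a ^ 2 = 4 * (k:ℝ) + 3 := Real.sq_sqrt (by positivity)
  have hX7 : X ^ 2 ≤ 4 * (k:ℝ) + 7 := by
    have := pow_le_pow_left₀ hX0 h2 2
    rwa [Real.sq_sqrt (by positivity)] at this
  rcases le_or_gt X (Real.sqrt (4 * (k:ℝ) + 5)) with hc | hc
  · apply intervalIntegral.integral_nonneg h1
    intro u hu
    have hu0 : 0 ≤ u := le_trans ha0 hu.1
    apply cos_lobe_nonneg k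
    · rw [← ha2]; exact pow_le_pow_left₀ ha0 hu.1 2
    · have := pow_le_pow_left₀ hu0 (le_trans hu.2 hc) 2
      rwa [Real.sq_sqrt (by positivity)] at this
  · have hm0 : (0:ℝ) ≤ Real.sqrt (4 * (k:ℝ) + 5) := Real.sqrt_nonneg _
    have hX5 : 4 * (k:ℝ) + 5 ≤ X ^ 2 := by
      have := pow_le_pow_left₀ hm0 hc.le 2
      rwa [Real.sq_sqrt (by positivity)] at this
    set Y := Real.sqrt (X ^ 2 - 2) with hY_def
    have hY2 : Y ^ 2 = X ^ 2 - 2 := Real.sq_sqrt (by linarith)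
    have hYX : Real.sqrt (Y ^ 2 + 2) = X := by
      rw [hY2]; rw [show X ^ 2 - 2 + 2 = X ^ 2 by ring, Real.sqrt_sq hX0]
    have hY1 : a ≤ Y := Real.sqrt_le_sqrt (by linarith)
    have hY5 : Y ≤ Real.sqrt (4 * (k:ℝ) + 5) := Real.sqrt_le_sqrt (by linarith)
    have := fresnel_pair k hY1 hY5
    rwa [hYX] at this

lemma fresnel_base : 0 ≤ fresnelC (Real.sqrt 3) := by
  have hπ1 : (3.141592:ℝ) < π := Real.pi_gt_d6
  have hπ2 : π < 3.141593 := Real.pi_lt_d6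
  have hπ0 := Real.pi_pos
  set c := Real.sqrt (1 + 2 / π) with hc_def
  have hc0 : 0 ≤ c := Real.sqrt_nonneg _
  have hc2 : c ^ 2 = 1 + 2 / π := Real.sq_sqrt (by positivity)
  have hc2' : c ^ 2 * π = π + 2 := by rw [hc2]; field_simp
  have hc3' : c ^ 3 * π = c * π + 2 * c := by
    have : c ^ 3 = c ^ 2 * c := by ring
    rw [this]
    nlinarith [hc2']
  have hc_lb : (1.279:ℝ) ≤ c := by
    have h1 : (1.279:ℝ) ^ 2 ≤ 1 + 2 / π := by
      rw [show (1.279:ℝ)^2 = 1.635841 by norm_num]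
      have : (0.635841:ℝ) ≤ 2 / π := by
        rw [le_div_iff₀ hπ0]; nlinarith
      linarith
    calc (1.279:ℝ) = Real.sqrt (1.279 ^ 2) := by
          rw [Real.sqrt_sq (by norm_num)]
      _ ≤ c := Real.sqrt_le_sqrt h1
  have hc_ub : c ≤ 1.28 := by
    have h1 : 1 + 2 / π ≤ (1.28:ℝ) ^ 2 := by
      have : 2 / π ≤ (0.6384:ℝ) := by
        rw [div_le_iff₀ hπ0]; nlinarith
      nlinarith
    calc c ≤ Real.sqrt ((1.28:ℝ) ^ 2) := Real.sqrt_le_sqrt h1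
      _ = 1.28 := Real.sqrt_sq (by norm_num)
  have hs0 : (0:ℝ) ≤ Real.sqrt 3 := Real.sqrt_nonneg _
  have hs2 : Real.sqrt 3 ^ 2 = 3 := Real.sq_sqrt (by norm_num)
  have hs_ub : Real.sqrt 3 ≤ 1.7321 := by
    calc Real.sqrt 3 ≤ Real.sqrt ((1.7321:ℝ) ^ 2) := Real.sqrt_le_sqrt (by norm_num)
      _ = 1.7321 := Real.sqrt_sq (by norm_num)
  have hs_lb : (1.732:ℝ) ≤ Real.sqrt 3 := by
    calc (1.732:ℝ) = Real.sqrt (1.732 ^ 2) := by rw [Real.sqrt_sq (by norm_num)]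
      _ ≤ Real.sqrt 3 := Real.sqrt_le_sqrt (by norm_num)
  have hc1 : (1:ℝ) ≤ c := by linarith
  have hcs : c ≤ Real.sqrt 3 := by linarith
  -- piece A : ∫₀¹
  have hA : (1:ℝ) - π ^ 2 / 40 ≤ ∫ x in (0:ℝ)..1, Real.cos (π * x ^ 2 / 2) := by
    have hcomp : (∫ x in (0:ℝ)..1, (1 - π ^ 2 / 8 * x ^ 4)) = 1 - π ^ 2 / 40 := by
      rw [intervalIntegral.integral_sub intervalIntegrable_const
        ((by fun_prop : Continuous fun x : ℝ => π ^ 2 / 8 * x ^ 4).intervalIntegrable 0 1),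
        intervalIntegral.integral_const_mul, integral_pow, intervalIntegral.integral_const]
      norm_num
      ring
    rw [← hcomp]
    apply intervalIntegral.integral_mono_on (by norm_num)
      ((by fun_prop : Continuous fun x : ℝ => 1 - π ^ 2 / 8 * x ^ 4).intervalIntegrable 0 1)
      (fresnel_int 0 1)
    intro x _
    calc (1:ℝ) - π ^ 2 / 8 * x ^ 4 = 1 - (π * x ^ 2 / 2) ^ 2 / 2 := by ring
      _ ≤ Real.cos (π * x ^ 2 / 2) := Real.one_sub_sq_div_two_le_cos
  -- piece B : ∫₁ᶜ
  have hB : -(π / 2) * ((c ^ 3 - 1) / 3 - (c - 1)) ≤ ∫ x in (1:ℝ)..c, Real.cos (π * x ^ 2 / 2) := by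
    have hcomp : (∫ x in (1:ℝ)..c, -(π / 2) * (x ^ 2 - 1))
        = -(π / 2) * ((c ^ 3 - 1) / 3 - (c - 1)) := by
      rw [intervalIntegral.integral_const_mul,
        intervalIntegral.integral_sub
          ((by fun_prop : Continuous fun x : ℝ => x ^ 2).intervalIntegrable 1 c)
          intervalIntegrable_const,
        integral_pow, intervalIntegral.integral_const]
      push_cast
      simp only [smul_eq_mul]
      ring
    rw [← hcomp]
    apply intervalIntegral.integral_mono_on hc1
      ((by fun_prop : Continuous fun x : ℝ => -(π / 2) * (x ^ 2 - 1)).intervalIntegrable 1 c)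
      (fresnel_int 1 c)
    intro x hx
    have hx1 : (1:ℝ) ≤ x := hx.1
    have hθ : (0:ℝ) ≤ π * (x ^ 2 - 1) / 2 :=
      div_nonneg (mul_nonneg hπ0.le (by nlinarith)) (by norm_num)
    have e : π * x ^ 2 / 2 = π * (x ^ 2 - 1) / 2 + π / 2 := by ring
    rw [e, Real.cos_add_pi_div_two]
    have := Real.sin_le hθ
    linarith
  -- piece C : ∫ᶜ^√3
  have hC : -(Real.sqrt 3 - c) ≤ ∫ x in c..Real.sqrt 3, Real.cos (π * x ^ 2 / 2) := by
    have hcomp : (∫ _x in c..Real.sqrt 3, (-1:ℝ)) = -(Real.sqrt 3 - c) := by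
      rw [intervalIntegral.integral_const]
      simp
    rw [← hcomp]
    apply intervalIntegral.integral_mono_on hcs
      (intervalIntegrable_const) (fresnel_int c _)
    intro x _
    exact Real.neg_one_le_cos _
  have hsplit : fresnelC (Real.sqrt 3)
      = (∫ x in (0:ℝ)..1, Real.cos (π * x ^ 2 / 2))
        + (∫ x in (1:ℝ)..c, Real.cos (π * x ^ 2 / 2))
        + (∫ x in c..Real.sqrt 3, Real.cos (π * x ^ 2 / 2)) := by
    have e1 := integral_add_adjacent_intervals (fresnel_int 0 1) (fresnel_int 1 c)
    have e2 := integral_add_adjacent_intervals (fresnel_int 0 c) (fresnel_int c (Real.sqrt 3))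
    rw [fresnelC, ← e2, ← e1]
  rw [hsplit]
  have hπsq : π ^ 2 ≤ 9.8697 := by nlinarith
  have hcpi : (4.018096:ℝ) ≤ c * π := by nlinarith
  nlinarith [hA, hB, hC, hc3', hcpi, hπsq, hπ2, hc_lb, hs_ub]

lemma fresnel_Q : ∀ k : ℕ, ∀ X : ℝ, Real.sqrt (4 * (k:ℝ) + 3) ≤ X →
    X ≤ Real.sqrt (4 * (k:ℝ) + 7) → fresnelC (Real.sqrt 3) ≤ fresnelC X := by
  intro k
  induction k with
  | zero =>
    intro X h1 h2
    have e3 : (4 * ((0:ℕ):ℝ) + 3) = 3 := by norm_num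
    have hstep := fresnel_step 0 h1 h2
    rw [e3] at h1 hstep
    have hsum : fresnelC (Real.sqrt 3) + (∫ x in (Real.sqrt 3)..X, Real.cos (π * x ^ 2 / 2))
        = fresnelC X := by
      rw [fresnelC, fresnelC]
      exact integral_add_adjacent_intervals (fresnel_int 0 _) (fresnel_int _ X)
    linarith
  | succ k ih =>
    intro X h1 h2
    have ecast : (4 * ((k + 1 : ℕ):ℝ) + 3) = 4 * (k:ℝ) + 7 := by push_cast; ring
    have hstep := fresnel_step (k + 1) h1 h2
    rw [ecast] at h1 hstep
    have hprev : fresnelC (Real.sqrt 3) ≤ fresnelC (Real.sqrt (4 * (k:ℝ) + 7)) :=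
      ih _ (Real.sqrt_le_sqrt (by linarith)) le_rfl
    have hsum : fresnelC (Real.sqrt (4 * (k:ℝ) + 7))
        + (∫ x in Real.sqrt (4 * (k:ℝ) + 7)..X, Real.cos (π * x ^ 2 / 2)) = fresnelC X := by
      rw [fresnelC, fresnelC]
      exact integral_add_adjacent_intervals (fresnel_int 0 _) (fresnel_int _ X)
    linarith

theorem fresnelC_nonneg {X : ℝ} (hX : 0 ≤ X) : 0 ≤ fresnelC X := by
  have hbase := fresnel_base
  rcases le_or_gt X 1 with h1 | h1
  · unfold fresnelC
    apply intervalIntegral.integral_nonneg hX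
    intro u hu
    have hu0 : 0 ≤ u := hu.1
    have hu2 : u ^ 2 ≤ 1 := by nlinarith [hu.2]
    apply Real.cos_nonneg_of_mem_Icc
    constructor
    · nlinarith [Real.pi_pos, sq_nonneg u]
    · nlinarith [Real.pi_pos, sq_nonneg u]
  · rcases le_or_gt X (Real.sqrt 3) with h2 | h2
    · -- 1 < X ≤ √3
      have hneg : (∫ x in X..Real.sqrt 3, Real.cos (π * x ^ 2 / 2)) ≤ 0 := by
        rw [← neg_nonneg, ← intervalIntegral.integral_neg]
        apply intervalIntegral.integral_nonneg h2
        intro u hu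
        have hu1 : (1:ℝ) ≤ u := le_trans h1.le hu.1
        have hu3 : u ^ 2 ≤ 3 := by
          have := pow_le_pow_left₀ (by linarith : (0:ℝ) ≤ u) hu.2 2
          rwa [Real.sq_sqrt (by norm_num)] at this
        have := cos_neg_lobe (by nlinarith : (1:ℝ) ≤ u ^ 2) hu3
        linarith
      have hsum : fresnelC X + (∫ x in X..Real.sqrt 3, Real.cos (π * x ^ 2 / 2))
          = fresnelC (Real.sqrt 3) := by
        rw [fresnelC, fresnelC]
        exact integral_add_adjacent_intervals (fresnel_int 0 X) (fresnel_int X _)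
      linarith
    · -- √3 < X
      set k := ⌊(X ^ 2 - 3) / 4⌋₊ with hk_def
      have hs3 : (3:ℝ) ≤ X ^ 2 := by
        have := pow_le_pow_left₀ (Real.sqrt_nonneg 3) h2.le 2
        rwa [Real.sq_sqrt (by norm_num)] at this
      have hk1 : (k:ℝ) ≤ (X ^ 2 - 3) / 4 := Nat.floor_le (by linarith)
      have hk2 : (X ^ 2 - 3) / 4 < (k:ℝ) + 1 := Nat.lt_floor_add_one _
      have hA : Real.sqrt (4 * (k:ℝ) + 3) ≤ X := by
        have h := Real.sqrt_le_sqrt (by linarith : 4 * (k:ℝ) + 3 ≤ X ^ 2)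
        rwa [Real.sqrt_sq hX] at h
      have hB : X ≤ Real.sqrt (4 * (k:ℝ) + 7) := by
        have h := Real.sqrt_le_sqrt (by linarith : X ^ 2 ≤ 4 * (k:ℝ) + 7)
        rwa [Real.sqrt_sq hX] at h
      have := fresnel_Q k X hA hB
      linarith
end
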